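/- arXiv:math/0012045 — 3 statements merged into one kernel-verified Lean document; each statement's English description precedes it below -/
import Mathlib

section
/- Let K be a field of characteristic different from 2, let V be a finite-dimensional K-vector space equipped with a nondegenerate antisymmetric K-bilinear form ⟨·,·⟩ : V × V → K, and let ε : V → V be a nonzero K-linear map satisfying ⟨u, ε v⟩ = ⟨ε u, v⟩ for all u, v ∈ V. Then the dimension of the image of ε (the rank of ε) is even. -/
/-- A nondegenerate antisymmetric bilinear form on a finite-dimensional space over a field
of characteristic ≠ 2 forces even dimension. -/
lemma aux_even_finrank {K W : Type*} [Field K] [AddCommGroup W] [Module K W]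
    [FiniteDimensional K W] (hchar : ringChar K ≠ 2)
    (C : W →ₗ[K] W →ₗ[K] K)
    (hanti : ∀ u v : W, C u v = - C v u)
    (hnd : ∀ u : W, (∀ v : W, C u v = 0) → u = 0) :
    Even (Module.finrank K W) := by
  by_contra hodd
  rw [Nat.not_even_iff_odd] at hodd
  set n := Module.finrank K W with hn
  let b : Module.Basis (Fin n) K W := Module.finBasis K W
  set M := LinearMap.toMatrix₂ b b C with hM
  have hsep : C.SeparatingLeft := hnd
  have hdet : M.det ≠ 0 := (LinearMap.separatingLeft_iff_det_ne_zero b).mp hsep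
  have hMT : M.transpose = -M := by
    ext i j
    simp only [Matrix.transpose_apply, Matrix.neg_apply, hM, LinearMap.toMatrix₂_apply]
    exact (hanti (b j) (b i)).symm ▸ (hanti (b j) (b i))
  have h1 : M.det = (-1 : K) ^ n * M.det := by
    calc M.det = M.transpose.det := (Matrix.det_transpose M).symm
    _ = (-M).det := by rw [hMT]
    _ = (-1 : K) ^ n * M.det := by rw [Matrix.det_neg, Fintype.card_fin]
  rw [hodd.neg_one_pow, neg_one_mul] at h1
  have h2 : (2 : K) * M.det = 0 := by linear_combination h1
  exact hdet (by
    rcases mul_eq_zero.mp h2 with h | h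
    · exact absurd h (Ring.two_ne_zero hchar)
    · exact h)

/-- If `V` is a finite-dimensional vector space over a field `K` of characteristic ≠ 2 with a
nondegenerate antisymmetric bilinear form, and `ε` is a nonzero self-adjoint endomorphism
of `V`, then the rank of `ε` is even. -/
theorem stmt_1 {K V : Type*} [Field K] [AddCommGroup V] [Module K V]
    [FiniteDimensional K V]
    (hchar : ringChar K ≠ 2)
    (B : V →ₗ[K] V →ₗ[K] K)
    (hanti : ∀ u v : V, B u v = - B v u)
    (hnondeg : ∀ u : V, (∀ v : V, B u v = 0) → u = 0)
    (ε : V →ₗ[K] V) (hε : ε ≠ 0)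
    (hsym : ∀ u v : V, B u (ε v) = B (ε u) v) :
    Even (Module.finrank K (LinearMap.range ε)) := by
  classical
  set N := LinearMap.ker ε with hN
  -- B (ε u) vanishes on N
  have hkill : ∀ u : V, N ≤ LinearMap.ker (B (ε u)) := by
    intro u v hv
    have hv' : ε v = 0 := hv
    simp only [LinearMap.mem_ker]
    rw [← hsym, hv', map_zero]
  -- the induced map V → (V/N →ₗ K)
  let D : V →ₗ[K] (V ⧸ N) →ₗ[K] K :=
    { toFun := fun u => N.liftQ (B (ε u)) (hkill u)
      map_add' := by
        intro u u'
        apply Submodule.linearMap_qext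
        ext v
        simp
      map_smul' := by
        intro c u
        apply Submodule.linearMap_qext
        ext v
        simp }
  have hD : ∀ u v : V, D u (Submodule.Quotient.mk v) = B (ε u) v := fun u v => rfl
  have hDkill : N ≤ LinearMap.ker D := by
    intro u hu
    have hu' : ε u = 0 := hu
    simp only [LinearMap.mem_ker]
    apply Submodule.linearMap_qext
    ext v
    simp [hD, hu']
  let C : (V ⧸ N) →ₗ[K] (V ⧸ N) →ₗ[K] K := N.liftQ D hDkill
  have hC : ∀ u v : V, C (Submodule.Quotient.mk u) (Submodule.Quotient.mk v) = B (ε u) v :=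
    fun u v => rfl
  have hCanti : ∀ x y : V ⧸ N, C x y = - C y x := by
    intro x y
    obtain ⟨u, rfl⟩ := Submodule.Quotient.mk_surjective N x
    obtain ⟨v, rfl⟩ := Submodule.Quotient.mk_surjective N y
    rw [hC, hC, ← hsym u v, hanti u (ε v)]
  have hCnd : ∀ x : V ⧸ N, (∀ y : V ⧸ N, C x y = 0) → x = 0 := by
    intro x hx
    obtain ⟨u, rfl⟩ := Submodule.Quotient.mk_surjective N x
    have hεu : ε u = 0 := by
      apply hnondeg
      intro v
      simpa [hC] using hx (Submodule.Quotient.mk v)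
    exact (Submodule.Quotient.mk_eq_zero N).mpr hεu
  have heven : Even (Module.finrank K (V ⧸ N)) := aux_even_finrank hchar C hCanti hCnd
  have h1 : Module.finrank K (V ⧸ N) + Module.finrank K N = Module.finrank K V :=
    Submodule.finrank_quotient_add_finrank N
  have h2 : Module.finrank K (LinearMap.range ε) + Module.finrank K N = Module.finrank K V :=
    LinearMap.finrank_range_add_finrank_ker ε
  have : Module.finrank K (LinearMap.range ε) = Module.finrank K (V ⧸ N) := by omega
  rwa [this]
end

section
/- Let K be a field of characteristic different from 2, let V be a K-vector space equipped with a nondegenerate antisymmetric K-bilinear form ⟨·,·⟩ : V × V → K, and let ε : V → V be a K-linear map satisfying ⟨u, ε v⟩ = ⟨ε u, v⟩ for all u, v ∈ V. Then there exists a K-bilinear form B on the image of ε such that B(ε w, v) = ⟨w, v⟩ for all w ∈ V and all v in the image of ε, and this form B is antisymmetric and nondegenerate on im ε. -/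
/-- If `V` is a vector space over a field `K` of characteristic ≠ 2 with a nondegenerate
antisymmetric bilinear form `B`, and `ε` is a self-adjoint endomorphism of `V`, then there is
a bilinear form `B'` on the image of `ε` with `B' (ε w) v = B w v` for all `w : V` and all
`v` in the image, and `B'` is antisymmetric and nondegenerate. -/
theorem stmt_3 {K V : Type*} [Field K] [AddCommGroup V] [Module K V]
    (hchar : ringChar K ≠ 2)
    (B : V →ₗ[K] V →ₗ[K] K)
    (hanti : ∀ u v : V, B u v = - B v u)
    (hnondeg : ∀ u : V, (∀ v : V, B u v = 0) → u = 0)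
    (ε : V →ₗ[K] V)
    (hsym : ∀ u v : V, B u (ε v) = B (ε u) v) :
    ∃ B' : (LinearMap.range ε) →ₗ[K] (LinearMap.range ε) →ₗ[K] K,
      (∀ (w : V) (v : LinearMap.range ε),
        B' ⟨ε w, LinearMap.mem_range_self ε w⟩ v = B w (v : V)) ∧
      (∀ u v : LinearMap.range ε, B' u v = - B' v u) ∧
      (∀ u : LinearMap.range ε, (∀ v : LinearMap.range ε, B' u v = 0) → u = 0) := by
  -- f w = B w restricted to range ε
  set f : V →ₗ[K] (LinearMap.range ε →ₗ[K] K) :=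
    B.compl₂ (LinearMap.range ε).subtype with hf
  have hker : LinearMap.ker ε ≤ LinearMap.ker f := by
    intro w hw
    simp only [LinearMap.mem_ker] at hw ⊢
    ext ⟨v, x, hx⟩
    simp only [hf, LinearMap.compl₂_apply, Submodule.coe_subtype, LinearMap.zero_apply]
    rw [← hx, hsym, hw]
    simp
  set g : (V ⧸ LinearMap.ker ε) →ₗ[K] (LinearMap.range ε →ₗ[K] K) :=
    (LinearMap.ker ε).liftQ f hker with hg
  set B' : (LinearMap.range ε) →ₗ[K] (LinearMap.range ε →ₗ[K] K) :=
    g ∘ₗ ε.quotKerEquivRange.symm.toLinearMap with hB'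
  have key : ∀ (w : V) (v : LinearMap.range ε),
      B' ⟨ε w, LinearMap.mem_range_self ε w⟩ v = B w (v : V) := by
    intro w v
    simp only [hB', LinearMap.coe_comp, Function.comp_apply, LinearEquiv.coe_coe,
      ε.quotKerEquivRange_symm_apply_image w (LinearMap.mem_range_self ε w)]
    simp [hg, hf]
  refine ⟨B', key, ?_, ?_⟩
  · rintro ⟨u, w, rfl⟩ ⟨v, x, rfl⟩
    rw [key w ⟨ε x, LinearMap.mem_range_self ε x⟩, key x ⟨ε w, LinearMap.mem_range_self ε w⟩]
    rw [hanti w (ε x), hsym x w]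
  · rintro ⟨u, w, rfl⟩ h
    have : ε w = 0 := by
      apply hnondeg
      intro x
      have := h ⟨ε x, LinearMap.mem_range_self ε x⟩
      rw [key w ⟨ε x, LinearMap.mem_range_self ε x⟩] at this
      rwa [hsym] at this
    exact Subtype.ext this
end

section
/- Let K be a field of characteristic different from 2, let V be a 4-dimensional K-vector space equipped with a nondegenerate antisymmetric K-bilinear form ⟨·,·⟩ : V × V → K, and let ε : V → V be a K-linear map satisfying ⟨u, ε v⟩ = ⟨ε u, v⟩ for all u, v ∈ V. If ε ≠ 0 but ε ∘ ε = 0, then the dimension of the image of ε is exactly 2. -/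
/-- If `V` is a 4-dimensional vector space over a field `K` of characteristic ≠ 2 with a
nondegenerate antisymmetric bilinear form, and `ε` is a self-adjoint endomorphism of `V`
with `ε ≠ 0` but `ε ∘ ε = 0`, then the image of `ε` has dimension exactly 2. -/
theorem stmt_4 {K V : Type*} [Field K] [AddCommGroup V] [Module K V]
    (hchar : ringChar K ≠ 2)
    (hdim : Module.finrank K V = 4) [FiniteDimensional K V]
    (B : V →ₗ[K] V →ₗ[K] K)
    (hanti : ∀ u v : V, B u v = - B v u)
    (hnondeg : ∀ u : V, (∀ v : V, B u v = 0) → u = 0)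
    (ε : V →ₗ[K] V)
    (hsym : ∀ u v : V, B u (ε v) = B (ε u) v)
    (hne : ε ≠ 0) (hsq : ε ∘ₗ ε = 0) :
    Module.finrank K (LinearMap.range ε) = 2 := by
  have h2 : (2 : K) ≠ 0 := Ring.two_ne_zero hchar
  have hrk : Module.finrank K (LinearMap.range ε) + Module.finrank K (LinearMap.ker ε) = 4 := by
    rw [LinearMap.finrank_range_add_finrank_ker, hdim]
  have hle : LinearMap.range ε ≤ LinearMap.ker ε := by
    rintro x ⟨y, rfl⟩
    have : (ε ∘ₗ ε) y = 0 := by rw [hsq]; rfl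
    simpa [LinearMap.mem_ker] using this
  have hle2 : Module.finrank K (LinearMap.range ε) ≤ 2 := by
    have := Submodule.finrank_mono hle
    omega
  have hge1 : 1 ≤ Module.finrank K (LinearMap.range ε) := by
    by_contra h
    have h0 : Module.finrank K (LinearMap.range ε) = 0 := by omega
    have : LinearMap.range ε = ⊥ := Submodule.finrank_eq_zero.mp h0
    exact hne (LinearMap.range_eq_bot.mp this)
  have hne1 : Module.finrank K (LinearMap.range ε) ≠ 1 := by
    intro h1
    obtain ⟨u₀, hu₀⟩ : ∃ u, ε u ≠ 0 := by
      by_contra h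
      push_neg at h
      exact hne (LinearMap.ext fun x => by simpa using h x)
    set w := ε u₀ with hw_def
    have hw : w ≠ 0 := hu₀
    have hspan : LinearMap.range ε = Submodule.span K {w} := by
      have hle' : Submodule.span K {w} ≤ LinearMap.range ε := by
        rw [Submodule.span_le]
        rintro x rfl
        exact LinearMap.mem_range_self ε u₀
      have : Module.finrank K (Submodule.span K ({w} : Set V)) = 1 :=
        finrank_span_singleton hw
      exact (Submodule.eq_of_le_of_finrank_eq hle' (by rw [this, h1])).symm
    have hmul : ∀ u : V, ∃ c : K, ε u = c • w := by
      intro u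
      have : ε u ∈ LinearMap.range ε := LinearMap.mem_range_self ε u
      rw [hspan, Submodule.mem_span_singleton] at this
      obtain ⟨c, hc⟩ := this
      exact ⟨c, hc.symm⟩
    -- pick v with B w v ≠ 0
    obtain ⟨v, hv⟩ : ∃ v, B w v ≠ 0 := by
      by_contra h
      push_neg at h
      exact hw (hnondeg w h)
    obtain ⟨d, hd⟩ := hmul v
    have rel : ∀ (a b : V) (c e : K), ε a = c • w → ε b = e • w →
        e * B a w = c * B w b := by
      intro a b c e ha hb
      have := hsym a b
      rw [ha, hb] at this
      simpa [smul_eq_mul] using this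
    have hd0 : d = 0 := by
      have h1' := rel v v d d hd hd
      have h2' := hanti v w
      have hsum : (2 : K) * (d * B w v) = 0 := by
        rw [h2'] at h1'
        linear_combination -h1'
      have := mul_eq_zero.mp hsum
      rcases this with h | h
      · exact absurd h h2
      · rcases mul_eq_zero.mp h with h' | h'
        · exact h'
        · exact absurd h' hv
    have hkey := rel u₀ v 1 d (by rw [one_smul]) hd
    rw [hd0] at hkey
    simp at hkey
    exact hv hkey.symm
  omega
end
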